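/- arXiv:math/0103174 — 2 statements merged into one kernel-verified Lean document; each statement's English description precedes it below -/
import Mathlib

section
/- Let T(α,β) = Л(α) + Л(β) + Л(π − α − β), which is the hyperbolic volume of the ideal tetrahedron with dihedral angles α, β, and π − α − β. Then T is strictly concave on the open set {(α,β) ∈ ℝ² : α > 0, β > 0, α + β < π} and continuous on its closure {(α,β) ∈ ℝ² : α ≥ 0, β ≥ 0, α + β ≤ π}. -/
open Real

/-- The Lobachevsky function `Л(θ) = −∫₀^θ log |2 sin t| dt`. -/
noncomputable def lobachevsky (θ : ℝ) : ℝ := -∫ t in (0 : ℝ)..θ, Real.log |2 * Real.sin t|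

/-- The hyperbolic volume of the ideal tetrahedron with dihedral angles
`α`, `β` and `π − α − β`. -/
noncomputable def idealTetrahedronVolume (p : ℝ × ℝ) : ℝ :=
  lobachevsky p.1 + lobachevsky p.2 + lobachevsky (Real.pi - p.1 - p.2)

/-!
Since `log |2 sin|` is the log-norm of an analytic function, it is locally integrable, so `Л` is
continuous on all of `ℝ`, and `Л' = -log |2 sin|`, `Л'' = -cot` away from the zeros of `sin`.
Along a segment in direction `(u, v)` the second derivative of `T` is therefore `-Q` with
`Q = a u² + b v² + c (u + v)²`, where `a, b, c` are the cotangents of the three angles. These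
satisfy `ab + bc + ca = 1`, whence `(a + c) Q = ((a + c) u + c v)² + v²`, and
`a + c = sin β / (sin α sin γ) > 0`; so `Q` is positive definite and `T` is strictly concave.
-/

open Set Filter Topology

theorem HasDerivAt.fst {𝕜 E F : Type*} [NontriviallyNormedField 𝕜] [NormedAddCommGroup E]
    [NormedSpace 𝕜 E] [NormedAddCommGroup F] [NormedSpace 𝕜 F] {f : 𝕜 → E × F} {f' : E × F}
    {x : 𝕜} (h : HasDerivAt f f' x) : HasDerivAt (fun x => (f x).1) f'.1 x :=
  (hasFDerivAt_fst (p := f x)).comp_hasDerivAt x h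

theorem HasDerivAt.snd {𝕜 E F : Type*} [NontriviallyNormedField 𝕜] [NormedAddCommGroup E]
    [NormedSpace 𝕜 E] [NormedAddCommGroup F] [NormedSpace 𝕜 F] {f : 𝕜 → E × F} {f' : E × F}
    {x : 𝕜} (h : HasDerivAt f f' x) : HasDerivAt (fun x => (f x).2) f'.2 x :=
  (hasFDerivAt_snd (p := f x)).comp_hasDerivAt x h

theorem strictConcaveOn_of_hasDerivAt2_neg {D : Set ℝ} (hD : Convex ℝ D) {f f' f'' : ℝ → ℝ}
    (hf : ContinuousOn f D) (hf' : ∀ x ∈ interior D, HasDerivAt f (f' x) x)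
    (hf'' : ∀ x ∈ interior D, HasDerivAt f' (f'' x) x) (hneg : ∀ x ∈ interior D, f'' x < 0) :
    StrictConcaveOn ℝ D f := by
  refine strictConcaveOn_of_deriv2_neg hD hf fun x hx => ?_
  have hderiv : deriv f =ᶠ[𝓝 x] f' :=
    eventually_of_mem (isOpen_interior.mem_nhds hx) fun y hy => (hf' y hy).deriv
  rw [Function.iterate_succ_apply, Function.iterate_one, hderiv.deriv_eq, (hf'' x hx).deriv]
  exact hneg x hx

theorem strictConcaveOn_of_strictConcaveOn_lineMap {𝕜 E β : Type*} [Field 𝕜] [LinearOrder 𝕜]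
    [IsStrictOrderedRing 𝕜] [AddCommGroup E] [Module 𝕜 E] [AddCommMonoid β] [PartialOrder β]
    [Module 𝕜 β] {s : Set E} {f : E → β} (hs : Convex 𝕜 s)
    (h : ∀ x ∈ s, ∀ y ∈ s, x ≠ y →
      StrictConcaveOn 𝕜 (Icc (0 : 𝕜) 1) (f ∘ AffineMap.lineMap x y)) :
    StrictConcaveOn 𝕜 s f := by
  refine ⟨hs, fun x hx y hy hxy a b ha hb hab => ?_⟩
  have := (h x hx y hy hxy).2 (left_mem_Icc.2 zero_le_one) (right_mem_Icc.2 zero_le_one)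
    zero_ne_one ha hb hab
  rwa [Function.comp_apply, Function.comp_apply, Function.comp_apply,
    AffineMap.lineMap_apply_zero, AffineMap.lineMap_apply_one, smul_zero, smul_eq_mul, mul_one,
    zero_add, AffineMap.lineMap_apply_module, ← hab, add_sub_cancel_right] at this

theorem quadratic_pos_of_mul_add_mul_add_mul_eq_one {a b c u v : ℝ} (hac : 0 < a + c)
    (habc : a * b + b * c + c * a = 1) (huv : (u, v) ≠ 0) :
    0 < a * u ^ 2 + b * v ^ 2 + c * (u + v) ^ 2 := by
  have key : (a + c) * (a * u ^ 2 + b * v ^ 2 + c * (u + v) ^ 2)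
      = ((a + c) * u + c * v) ^ 2 + v ^ 2 := by linear_combination v ^ 2 * habc
  refine pos_of_mul_pos_right (key ▸ ?_) hac.le
  rcases eq_or_ne v 0 with rfl | hv
  · have hu : u ≠ 0 := fun hu => huv (by simp [hu])
    simpa using sq_pos_of_ne_zero (mul_ne_zero hac.ne' hu)
  · positivity

theorem cot_add_cot {x y : ℝ} (hx : sin x ≠ 0) (hy : sin y ≠ 0) :
    cot x + cot y = sin (x + y) / (sin x * sin y) := by
  rw [cot_eq_cos_div_sin, cot_eq_cos_div_sin, sin_add]
  field_simp
  ring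

theorem cot_mul_cot_add_cot_mul_cot_add_cot_mul_cot {x y z : ℝ} (h : x + y + z = π)
    (hx : sin x ≠ 0) (hy : sin y ≠ 0) (hz : sin z ≠ 0) :
    cot x * cot y + cot y * cot z + cot z * cot x = 1 := by
  obtain rfl : z = π - (x + y) := by linarith
  rw [sin_pi_sub, sin_add] at hz
  simp only [cot_eq_cos_div_sin, sin_pi_sub, cos_pi_sub, sin_add, cos_add]
  field_simp
  ring

theorem intervalIntegrable_log_abs_two_mul_sin (a b : ℝ) :
    IntervalIntegrable (fun t => log |2 * sin t|) MeasureTheory.volume a b :=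
  (analyticOnNhd_sin.const_smul (c := (2 : ℝ))).meromorphicOn.intervalIntegrable_log_norm

theorem continuous_lobachevsky : Continuous lobachevsky :=
  (intervalIntegral.continuous_primitive intervalIntegrable_log_abs_two_mul_sin 0).neg

theorem hasDerivAt_lobachevsky {θ : ℝ} (h : sin θ ≠ 0) :
    HasDerivAt lobachevsky (-log |2 * sin θ|) θ := by
  have hmeas : Measurable fun t => log |2 * sin t| := by fun_prop
  refine (intervalIntegral.integral_hasDerivAt_right (intervalIntegrable_log_abs_two_mul_sin 0 θ)
    hmeas.stronglyMeasurable.stronglyMeasurableAtFilter ?_).neg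
  exact ContinuousAt.log (by fun_prop) (by simpa using h)

theorem hasDerivAt_neg_log_abs_two_mul_sin {θ : ℝ} (h : sin θ ≠ 0) :
    HasDerivAt (fun θ => -log |2 * sin θ|) (-cot θ) θ := by
  simp only [log_abs]
  refine (((hasDerivAt_sin θ).const_mul 2).log (by simpa using h)).neg.congr_deriv ?_
  rw [cot_eq_cos_div_sin]
  field_simp

def idealTetrahedronAngles : Set (ℝ × ℝ) := {p | 0 < p.1 ∧ 0 < p.2 ∧ p.1 + p.2 < π}

theorem convex_idealTetrahedronAngles : Convex ℝ idealTetrahedronAngles := by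
  have h₁ := convex_halfSpace_gt (LinearMap.fst ℝ ℝ ℝ).isLinear 0
  have h₂ := convex_halfSpace_gt (LinearMap.snd ℝ ℝ ℝ).isLinear 0
  have h₃ := convex_halfSpace_lt (LinearMap.fst ℝ ℝ ℝ + LinearMap.snd ℝ ℝ ℝ).isLinear π
  exact h₁.inter (h₂.inter h₃)

theorem sin_pos_of_mem_idealTetrahedronAngles {p : ℝ × ℝ} (hp : p ∈ idealTetrahedronAngles) :
    0 < sin p.1 ∧ 0 < sin p.2 ∧ 0 < sin (π - p.1 - p.2) := by
  obtain ⟨h₁, h₂, h⟩ := hp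
  exact ⟨sin_pos_of_pos_of_lt_pi h₁ (by linarith), sin_pos_of_pos_of_lt_pi h₂ (by linarith),
    sin_pos_of_pos_of_lt_pi (by linarith) (by linarith)⟩

theorem continuous_idealTetrahedronVolume : Continuous idealTetrahedronVolume := by
  have := continuous_lobachevsky
  unfold idealTetrahedronVolume
  fun_prop

noncomputable def idealTetrahedronVolumeDeriv (p d : ℝ × ℝ) : ℝ :=
  -log |2 * sin p.1| * d.1 + -log |2 * sin p.2| * d.2 +
    -log |2 * sin (π - p.1 - p.2)| * (-d.1 - d.2)

noncomputable def idealTetrahedronVolumeNegHessian (p d : ℝ × ℝ) : ℝ :=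
  cot p.1 * d.1 ^ 2 + cot p.2 * d.2 ^ 2 + cot (π - p.1 - p.2) * (d.1 + d.2) ^ 2

theorem idealTetrahedronVolumeNegHessian_pos {p d : ℝ × ℝ} (hp : p ∈ idealTetrahedronAngles)
    (hd : d ≠ 0) : 0 < idealTetrahedronVolumeNegHessian p d := by
  obtain ⟨h₁, h₂, h₃⟩ := sin_pos_of_mem_idealTetrahedronAngles hp
  refine quadratic_pos_of_mul_add_mul_add_mul_eq_one ?_
    (cot_mul_cot_add_cot_mul_cot_add_cot_mul_cot (by ring) h₁.ne' h₂.ne' h₃.ne') hd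
  rw [cot_add_cot h₁.ne' h₃.ne', show p.1 + (π - p.1 - p.2) = π - p.2 by ring, sin_pi_sub]
  positivity

section Path

variable {γ : ℝ → ℝ × ℝ} {d : ℝ × ℝ} {t : ℝ}

theorem HasDerivAt.idealTetrahedronVolume_comp (hγ : HasDerivAt γ d t)
    (ht : γ t ∈ idealTetrahedronAngles) :
    HasDerivAt (fun s => idealTetrahedronVolume (γ s))
      (idealTetrahedronVolumeDeriv (γ t) d) t := by
  obtain ⟨h₁, h₂, h₃⟩ := sin_pos_of_mem_idealTetrahedronAngles ht
  have hγ₁ := hγ.fst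
  have hγ₂ := hγ.snd
  exact (((hasDerivAt_lobachevsky h₁.ne').comp t hγ₁).add
    ((hasDerivAt_lobachevsky h₂.ne').comp t hγ₂)).add
    ((hasDerivAt_lobachevsky h₃.ne').comp t ((hγ₁.const_sub π).sub hγ₂))

theorem HasDerivAt.idealTetrahedronVolumeDeriv_comp (hγ : HasDerivAt γ d t)
    (ht : γ t ∈ idealTetrahedronAngles) :
    HasDerivAt (fun s => idealTetrahedronVolumeDeriv (γ s) d)
      (-idealTetrahedronVolumeNegHessian (γ t) d) t := by
  obtain ⟨h₁, h₂, h₃⟩ := sin_pos_of_mem_idealTetrahedronAngles ht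
  have hγ₁ := hγ.fst
  have hγ₂ := hγ.snd
  refine (((((hasDerivAt_neg_log_abs_two_mul_sin h₁.ne').comp t hγ₁).mul_const d.1).add
    (((hasDerivAt_neg_log_abs_two_mul_sin h₂.ne').comp t hγ₂).mul_const d.2)).add
    (((hasDerivAt_neg_log_abs_two_mul_sin h₃.ne').comp t ((hγ₁.const_sub π).sub hγ₂)).mul_const
      (-d.1 - d.2))).congr_deriv ?_
  simp only [idealTetrahedronVolumeNegHessian]
  ring

end Path

theorem strictConcaveOn_idealTetrahedronVolume_comp_lineMap {x y : ℝ × ℝ}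
    (hx : x ∈ idealTetrahedronAngles) (hy : y ∈ idealTetrahedronAngles) (hxy : x ≠ y) :
    StrictConcaveOn ℝ (Icc (0 : ℝ) 1) (idealTetrahedronVolume ∘ AffineMap.lineMap x y) := by
  have hmem : ∀ t ∈ interior (Icc (0 : ℝ) 1), AffineMap.lineMap x y t ∈ idealTetrahedronAngles :=
    fun t ht => convex_idealTetrahedronAngles.lineMap_mem hx hy (interior_subset ht)
  have hγ : ∀ t : ℝ, HasDerivAt (AffineMap.lineMap x y) (y - x) t :=
    fun t => AffineMap.hasDerivAt_lineMap
  exact strictConcaveOn_of_hasDerivAt2_neg (convex_Icc 0 1)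
    (continuous_idealTetrahedronVolume.comp AffineMap.lineMap_continuous).continuousOn
    (fun t ht => (hγ t).idealTetrahedronVolume_comp (hmem t ht))
    (fun t ht => (hγ t).idealTetrahedronVolumeDeriv_comp (hmem t ht))
    fun t ht => neg_neg_of_pos
      (idealTetrahedronVolumeNegHessian_pos (hmem t ht) (sub_ne_zero.2 hxy.symm))

/-- The ideal tetrahedron volume `T(α,β) = Л(α) + Л(β) + Л(π−α−β)` is
strictly concave on `{(α,β) : α > 0, β > 0, α + β < π}` and continuous on the closure
`{(α,β) : α ≥ 0, β ≥ 0, α + β ≤ π}`. -/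
theorem idealTetrahedronVolume_strictConcaveOn_and_continuousOn :
    StrictConcaveOn ℝ {p : ℝ × ℝ | 0 < p.1 ∧ 0 < p.2 ∧ p.1 + p.2 < Real.pi}
      idealTetrahedronVolume ∧
    ContinuousOn idealTetrahedronVolume
      {p : ℝ × ℝ | 0 ≤ p.1 ∧ 0 ≤ p.2 ∧ p.1 + p.2 ≤ Real.pi} :=
  ⟨strictConcaveOn_of_strictConcaveOn_lineMap convex_idealTetrahedronAngles
      fun _ hx _ hy hxy => strictConcaveOn_idealTetrahedronVolume_comp_lineMap hx hy hxy,
    continuous_idealTetrahedronVolume.continuousOn⟩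
end

section
/- Let A, B, C ∈ (0,π) satisfy A + B + C < π, and set k = A + B + C − π (the curvature of the angle data {A,B,C}). If a ≥ 0 satisfies cosh a = (cos A + cos B · cos C)/(sin B · sin C), i.e. a is the length of the side opposite the angle A in the hyperbolic triangle realizing the angle data {A,B,C}, then 2 · sinh²(a/2) · sin B · sin C = cos A − cos(A − k). (This is the decoupling formula expressing −2·log(sinh(a/2)) in terms of the angle A, the curvature k, and the angles B, C.) -/
open Real

/-- **decoupling formula.** Let `A, B, C ∈ (0,π)` with `A + B + C < π`,
and let `k = A + B + C − π` be the curvature of the angle data `{A,B,C}`. If `a ≥ 0`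
is the length of the side opposite `A` in the hyperbolic triangle realizing this angle
data, i.e. `cosh a = (cos A + cos B · cos C)/(sin B · sin C)`, then
`2 · sinh²(a/2) · sin B · sin C = cos A − cos (A − k)`. -/
theorem decoupling_formula (A B C k a : ℝ)
    (hA : A ∈ Set.Ioo 0 Real.pi) (hB : B ∈ Set.Ioo 0 Real.pi) (hC : C ∈ Set.Ioo 0 Real.pi)
    (hsum : A + B + C < Real.pi)
    (hk : k = A + B + C - Real.pi)
    (ha : 0 ≤ a)
    (hcosh : Real.cosh a = (Real.cos A + Real.cos B * Real.cos C) / (Real.sin B * Real.sin C)) :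
    2 * (Real.sinh (a / 2)) ^ 2 * Real.sin B * Real.sin C
      = Real.cos A - Real.cos (A - k) := by
  have hsB : 0 < Real.sin B := Real.sin_pos_of_pos_of_lt_pi hB.1 hB.2
  have hsC : 0 < Real.sin C := Real.sin_pos_of_pos_of_lt_pi hC.1 hC.2
  have h2 : 2 * (Real.sinh (a / 2)) ^ 2 = Real.cosh a - 1 := by
    have h' : Real.cosh (2 * (a/2)) = Real.cosh (a/2) ^ 2 + Real.sinh (a/2) ^ 2 :=
      Real.cosh_two_mul _
    have h2' : Real.cosh (a/2) ^ 2 = Real.sinh (a/2) ^ 2 + 1 := Real.cosh_sq _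
    have : (2:ℝ) * (a/2) = a := by ring
    rw [this] at h'
    linarith
  have hAk : A - k = Real.pi - (B + C) := by rw [hk]; ring
  rw [h2, hcosh, hAk, Real.cos_pi_sub, Real.cos_add]
  field_simp
  ring
end
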